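/- For all reals α, β with 0 < α < 1 and 0 < β < min(2α, 2(1-α)), the limit as N → ∞ of (1/N)·ln( C(N - ⌊αN⌋, ⌊⌊βN⌋/2⌋)·C(⌊αN⌋ - 1, ⌈⌊βN⌋/2⌉ - 1) / C(N, ⌊αN⌋) ) exists and equals f^FF(α,β) = (1-α)·H(β/(2(1-α))) + α·H(β/(2α)) - H(α). -/

import Mathlib

/-!
Stirling's formula gives `log n! = n log n - n + O(log n)`, hence
`(1/N) log C(a_N, b_N) → c H(d/c)` whenever `a_N / N → c ≠ 0` and `b_N / N → d`: the terms
`n log n` recombine into the homogeneous form `negMulLog (c - d) + negMulLog d - negMulLog c` of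
the entropy. The ratio in the theorem is a quotient of three such binomial coefficients, with
`(c, d) = (1 - α, β/2), (α, β/2), (1, α)`; floors, halvings and the shifts by one move the
indices by `O(1)`, which does not change the normalized limits.
-/

open Filter

/-- Binary entropy function with natural logarithm (`Real.log 0 = 0` gives `H 0 = H 1 = 0`). -/
noncomputable def H (x : ℝ) : ℝ := -x * Real.log x - (1 - x) * Real.log (1 - x)

/-- Asymptotic input-output weight distribution of the 2-state feedforward encoder `[3]_8`. -/
noncomputable def fFF (α β : ℝ) : ℝ :=
  (1 - α) * H (β / (2 * (1 - α))) + α * H (β / (2 * α)) - H α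

open Real Topology
open scoped Nat

noncomputable def stirlingRemainder (n : ℕ) : ℝ := log n ! - (n * log n - n)

lemma stirlingRemainder_nonneg (n : ℕ) : 0 ≤ stirlingRemainder n := by
  rcases eq_or_ne n 0 with rfl | hn
  · simp [stirlingRemainder]
  have h2π : 0 ≤ log (2 * π) := log_nonneg (by linarith [pi_gt_three])
  unfold stirlingRemainder
  linarith [Stirling.le_log_factorial_stirling hn, log_natCast_nonneg n]

lemma stirlingRemainder_le {n : ℕ} (hn : n ≠ 0) : stirlingRemainder n ≤ 1 + log n / 2 := by
  obtain ⟨k, rfl⟩ := Nat.exists_eq_succ_of_ne_zero hn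
  have hseq : log (Stirling.stirlingSeq (k + 1)) ≤ log (Stirling.stirlingSeq 1) :=
    log_le_log (Stirling.stirlingSeq'_pos k) (Stirling.stirlingSeq'_antitone k.zero_le)
  have hk : (0 : ℝ) < k + 1 := by positivity
  rw [Stirling.log_stirlingSeq_formula, Stirling.stirlingSeq_one,
    log_div (exp_pos 1).ne' (by positivity), log_exp, log_sqrt zero_le_two,
    log_mul two_ne_zero (by positivity), log_div (by positivity) (exp_pos 1).ne', log_exp] at hseq
  simp only [stirlingRemainder, Nat.succ_eq_add_one, Nat.cast_add, Nat.cast_one] at hseq ⊢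
  linarith

lemma tendsto_log_natCast_div : Tendsto (fun N : ℕ => log N / N) atTop (𝓝 0) :=
  isLittleO_log_id_atTop.tendsto_div_nhds_zero.comp tendsto_natCast_atTop_atTop

lemma stirlingRemainder_le_div_add_log (n : ℕ) {N : ℕ} (hN : 1 ≤ N) :
    stirlingRemainder n ≤ n / N + log N := by
  have hN' : (0 : ℝ) < N := by exact_mod_cast hN
  rcases eq_or_ne n 0 with rfl | hn
  · simpa [stirlingRemainder] using log_natCast_nonneg N
  have hn' : (0 : ℝ) < n := by exact_mod_cast Nat.pos_of_ne_zero hn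
  have := log_le_sub_one_of_pos (div_pos hn' hN')
  rw [log_div hn'.ne' hN'.ne'] at this
  linarith [stirlingRemainder_le hn, log_natCast_nonneg n]

lemma tendsto_stirlingRemainder_div {m : ℕ → ℕ} {c : ℝ}
    (hm : Tendsto (fun N => (m N : ℝ) / N) atTop (𝓝 c)) :
    Tendsto (fun N => stirlingRemainder (m N) / N) atTop (𝓝 0) := by
  have hbound : Tendsto (fun N : ℕ => (m N : ℝ) / N / N + log N / N) atTop (𝓝 0) := by
    simpa using (hm.div_atTop tendsto_natCast_atTop_atTop).add tendsto_log_natCast_div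
  refine tendsto_of_tendsto_of_tendsto_of_le_of_le' tendsto_const_nhds hbound
    (Eventually.of_forall fun N => div_nonneg (stirlingRemainder_nonneg _) N.cast_nonneg) ?_
  filter_upwards [eventually_ge_atTop 1] with N hN
  rw [← add_div]
  exact div_le_div_of_nonneg_right (stirlingRemainder_le_div_add_log _ hN) N.cast_nonneg

lemma log_add_choose (i j : ℕ) :
    log ((i + j).choose j) = stirlingRemainder (i + j) - stirlingRemainder i - stirlingRemainder j
      + (negMulLog i + negMulLog j - negMulLog (i + j : ℕ)) := by
  have hfac := congrArg (fun n : ℕ => log n) (Nat.add_choose_mul_factorial_mul_factorial i j)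
  have hchoose : ((i + j).choose j : ℝ) ≠ 0 := by exact_mod_cast (Nat.choose_pos (by omega)).ne'
  simp only [Nat.cast_mul] at hfac
  rw [log_mul (by positivity) (by positivity), log_mul hchoose (by positivity)] at hfac
  simp only [stirlingRemainder, negMulLog, Nat.cast_add] at hfac ⊢
  linarith

lemma negMulLog_sum_div (x y t : ℝ) :
    (negMulLog x + negMulLog y - negMulLog (x + y)) / t =
      negMulLog (x / t) + negMulLog (y / t) - negMulLog ((x + y) / t) := by
  simp only [div_eq_mul_inv, negMulLog_mul]
  ring

lemma mul_H_div {c : ℝ} (hc : c ≠ 0) (d : ℝ) :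
    c * H (d / c) = negMulLog (c - d) + negMulLog d - negMulLog c := by
  have h := negMulLog_sum_div (c - d) d c
  rw [sub_add_cancel, div_self hc, negMulLog_one, sub_zero] at h
  rw [← mul_div_cancel₀ (negMulLog (c - d) + _ - _) hc, h, H, one_sub_div hc]
  simp only [negMulLog]
  ring

theorem tendsto_log_choose_div {a b : ℕ → ℕ} {c d : ℝ} (hc : c ≠ 0)
    (ha : Tendsto (fun N => (a N : ℝ) / N) atTop (𝓝 c))
    (hb : Tendsto (fun N => (b N : ℝ) / N) atTop (𝓝 d))
    (hba : ∀ᶠ N in atTop, b N ≤ a N) :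
    Tendsto (fun N : ℕ => 1 / (N : ℝ) * log ((a N).choose (b N))) atTop (𝓝 (c * H (d / c))) := by
  have hab : Tendsto (fun N => ((a N - b N : ℕ) : ℝ) / N) atTop (𝓝 (c - d)) := by
    refine (ha.sub hb).congr' ?_
    filter_upwards [hba] with N h
    rw [Nat.cast_sub h, sub_div]
  have hrem := ((tendsto_stirlingRemainder_div ha).sub (tendsto_stirlingRemainder_div hab)).sub
    (tendsto_stirlingRemainder_div hb)
  have hent := (((continuous_negMulLog.tendsto _).comp hab).add
    ((continuous_negMulLog.tendsto d).comp hb)).sub ((continuous_negMulLog.tendsto c).comp ha)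
  have hlim := hrem.add hent
  rw [sub_zero, sub_zero, zero_add, ← mul_H_div hc] at hlim
  refine hlim.congr' ?_
  filter_upwards [hba] with N h
  obtain ⟨k, hk⟩ : ∃ k, a N = k + b N := ⟨_, (Nat.sub_add_cancel h).symm⟩
  simp only [Function.comp_apply, hk, Nat.add_sub_cancel, log_add_choose, Nat.cast_add,
    ← negMulLog_sum_div]
  ring

lemma tendsto_div_of_abs_sub_le {u v : ℕ → ℝ} {c C : ℝ} (huv : ∀ᶠ N in atTop, |u N - v N| ≤ C)
    (hv : Tendsto (fun N => v N / N) atTop (𝓝 c)) :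
    Tendsto (fun N => u N / N) atTop (𝓝 c) := by
  have h0 : Tendsto (fun N : ℕ => (u N - v N) / N) atTop (𝓝 0) := by
    refine squeeze_zero_norm' (a := fun N : ℕ => C / N) ?_
      (tendsto_const_nhds.div_atTop tendsto_natCast_atTop_atTop)
    filter_upwards [huv] with N h
    rw [norm_div, norm_natCast]
    exact div_le_div_of_nonneg_right h N.cast_nonneg
  simpa using (hv.add h0).congr fun N => by ring

section NatCastDiv

variable {m : ℕ → ℕ} {c : ℝ}

lemma Filter.Tendsto.natCast_add_div (hm : Tendsto (fun N => (m N : ℝ) / N) atTop (𝓝 c))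
    (k : ℕ) :
    Tendsto (fun N => ((m N + k : ℕ) : ℝ) / N) atTop (𝓝 c) :=
  tendsto_div_of_abs_sub_le (C := k) (Eventually.of_forall fun N => by simp) hm

lemma Filter.Tendsto.natCast_sub_div (hm : Tendsto (fun N => (m N : ℝ) / N) atTop (𝓝 c))
    (k : ℕ) :
    Tendsto (fun N => ((m N - k : ℕ) : ℝ) / N) atTop (𝓝 c) := by
  refine tendsto_div_of_abs_sub_le (C := k) (Eventually.of_forall fun N => ?_) hm
  have hle : ((m N - k : ℕ) : ℝ) ≤ m N := by exact_mod_cast Nat.sub_le _ _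
  have hge : (m N : ℝ) ≤ (m N - k : ℕ) + k := by exact_mod_cast (by omega : m N ≤ m N - k + k)
  rw [abs_le]
  constructor <;> linarith

lemma Filter.Tendsto.natCast_div_div (hm : Tendsto (fun N => (m N : ℝ) / N) atTop (𝓝 c))
    (k : ℕ) :
    Tendsto (fun N => ((m N / k : ℕ) : ℝ) / N) atTop (𝓝 (c / k)) := by
  refine tendsto_div_of_abs_sub_le (v := fun N => (m N : ℝ) / k) (C := 1)
    (Eventually.of_forall fun N => ?_) ((hm.div_const k).congr fun N => div_right_comm _ _ _)
  have hle : ((m N / k : ℕ) : ℝ) ≤ m N / k := Nat.cast_div_le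
  have hge := Nat.sub_one_lt_floor ((m N : ℝ) / k)
  rw [Nat.floor_div_eq_div] at hge
  rw [abs_le]
  constructor <;> linarith

lemma Filter.Tendsto.natCast_self_sub_div (hm : Tendsto (fun N => (m N : ℝ) / N) atTop (𝓝 c))
    (hle : ∀ᶠ N in atTop, m N ≤ N) :
    Tendsto (fun N => ((N - m N : ℕ) : ℝ) / N) atTop (𝓝 (1 - c)) := by
  refine (tendsto_const_nhds.sub hm).congr' ?_
  filter_upwards [hle, eventually_ne_atTop 0] with N h hN
  rw [Nat.cast_sub h, sub_div, div_self (Nat.cast_ne_zero.mpr hN)]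

lemma eventually_le_of_tendsto_div {a : ℕ → ℕ} {d : ℝ} (hdc : d < c)
    (ha : Tendsto (fun N => (a N : ℝ) / N) atTop (𝓝 c))
    (hm : Tendsto (fun N => (m N : ℝ) / N) atTop (𝓝 d)) :
    ∀ᶠ N in atTop, m N ≤ a N := by
  filter_upwards [hm.eventually_lt ha hdc, eventually_ne_atTop 0] with N h hN
  have hN' : (0 : ℝ) < N := by exact_mod_cast Nat.pos_of_ne_zero hN
  exact_mod_cast ((div_lt_div_iff_of_pos_right hN').mp h).le

end NatCastDiv

lemma tendsto_nat_floor_mul_natCast_div {a : ℝ} (ha : 0 ≤ a) :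
    Tendsto (fun N : ℕ => (⌊a * N⌋₊ : ℝ) / N) atTop (𝓝 a) :=
  (tendsto_nat_floor_mul_div_atTop ha).comp tendsto_natCast_atTop_atTop

lemma tendsto_natCast_div_self : Tendsto (fun N : ℕ => (N : ℝ) / N) atTop (𝓝 1) :=
  tendsto_const_nhds.congr' <| by
    filter_upwards [eventually_ne_atTop 0] with N hN
    rw [div_self (Nat.cast_ne_zero.mpr hN)]

theorem stmt_7 (α β : ℝ) (hα0 : 0 < α) (hα1 : α < 1)
    (hβ0 : 0 < β) (hβu : β < min (2 * α) (2 * (1 - α))) :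
    Tendsto (fun N : ℕ =>
      (1 / (N : ℝ)) * Real.log (
        ((Nat.choose (N - ⌊α * (N : ℝ)⌋₊) (⌊β * (N : ℝ)⌋₊ / 2) *
          Nat.choose (⌊α * (N : ℝ)⌋₊ - 1) ((⌊β * (N : ℝ)⌋₊ + 1) / 2 - 1) : ℕ) : ℝ) /
        ((Nat.choose N ⌊α * (N : ℝ)⌋₊ : ℕ) : ℝ)))
      atTop (nhds (fFF α β)) := by
  have hβα : β / 2 < α := by linarith [min_le_left (2 * α) (2 * (1 - α))]
  have hβα' : β / 2 < 1 - α := by linarith [min_le_right (2 * α) (2 * (1 - α))]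
  have hα := tendsto_nat_floor_mul_natCast_div hα0.le
  have hβ := tendsto_nat_floor_mul_natCast_div hβ0.le
  have hαN : ∀ᶠ N : ℕ in atTop, ⌊α * N⌋₊ ≤ N := Eventually.of_forall fun N =>
    Nat.floor_le_of_le (mul_le_of_le_one_left N.cast_nonneg hα1.le)
  have h1α := hα.natCast_self_sub_div hαN
  have hα' := hα.natCast_sub_div 1
  have hβ2 : Tendsto (fun N : ℕ => ((⌊β * N⌋₊ / 2 : ℕ) : ℝ) / N) atTop (𝓝 (β / 2)) := by
    exact_mod_cast hβ.natCast_div_div 2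
  have hβ2' :
      Tendsto (fun N : ℕ => (((⌊β * N⌋₊ + 1) / 2 - 1 : ℕ) : ℝ) / N) atTop (𝓝 (β / 2)) := by
    exact_mod_cast ((hβ.natCast_add_div 1).natCast_div_div 2).natCast_sub_div 1
  have hle1 := eventually_le_of_tendsto_div hβα' h1α hβ2
  have hle2 := eventually_le_of_tendsto_div hβα hα' hβ2'
  have hle3 := eventually_le_of_tendsto_div hα1 tendsto_natCast_div_self hα
  have hlim := ((tendsto_log_choose_div (sub_ne_zero.mpr hα1.ne') h1α hβ2 hle1).add
    (tendsto_log_choose_div hα0.ne' hα' hβ2' hle2)).sub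
    (tendsto_log_choose_div one_ne_zero tendsto_natCast_div_self hα hle3)
  rw [div_one, one_mul, div_div, div_div] at hlim
  refine hlim.congr' ?_
  filter_upwards [hle1, hle2, hle3] with N h1 h2 h3
  have c1 : ((N - ⌊α * N⌋₊).choose (⌊β * N⌋₊ / 2) : ℝ) ≠ 0 := by
    exact_mod_cast (Nat.choose_pos h1).ne'
  have c2 : ((⌊α * N⌋₊ - 1).choose ((⌊β * N⌋₊ + 1) / 2 - 1) : ℝ) ≠ 0 := by
    exact_mod_cast (Nat.choose_pos h2).ne'
  have c3 : (N.choose ⌊α * N⌋₊ : ℝ) ≠ 0 := by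
    exact_mod_cast (Nat.choose_pos h3).ne'
  rw [Nat.cast_mul, log_div (mul_ne_zero c1 c2) c3, log_mul c1 c2]
  ring
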